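/- For each length i with 0 ≤ i ≤ n, the set of strings in ℰ of length exactly i has cardinality at most z. -/

import Mathlib

open scoped Classical

def matchProb {A : Type*} (p : ℕ → A → ℝ) : ℕ → List A → ℝ
  | _, [] => 1
  | i, a :: t => p i a * matchProb p (i + 1) t

/-- `P` is a solid factor of the weighted sequence (of length `n`, probabilities `p`,
threshold `1/z`) starting at (1-based) position `i`. -/
def SolidAt {A : Type*} (n : ℕ) (z : ℝ) (p : ℕ → A → ℝ) (i : ℕ) (P : List A) : Prop :=
  1 ≤ i ∧ i + P.length ≤ n + 1 ∧ 1 / z ≤ matchProb p i P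

/-- `P` is a right-maximal solid factor at position `i`: it is solid and no one-letter
extension is solid (this includes the case that `P` ends at position `n`). -/
def RightMaximalAt {A : Type*} (n : ℕ) (z : ℝ) (p : ℕ → A → ℝ) (i : ℕ) (P : List A) : Prop :=
  SolidAt n z p i P ∧ ∀ s : A, ¬ SolidAt n z p i (P ++ [s])

/-- The heavy-string suffix `𝐗[j..n]`, where `h j` is a heaviest letter at position `j`. -/
def heavyExt {A : Type*} (h : ℕ → A) (j n : ℕ) : List A :=
  (List.range (n + 1 - j)).map fun k => h (j + k)

/-- The set `ℰ` of extensions `F · 𝐗[j+1..n]` of all solid factors `F` of the weighted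
sequence. -/
def ExtSet {A : Type*} (n : ℕ) (z : ℝ) (p : ℕ → A → ℝ) (h : ℕ → A) : Set (List A) :=
  {S | ∃ i F, SolidAt n z p i F ∧ S = F ++ heavyExt h (i + F.length) n}

/-!
Fix a length `i` and put `j = n + 1 - i`: every string of `ℰ` of length `i` is the extension
`F · 𝐗[j + |F| .. n]` of a solid factor `F` starting at `j`. Lengthening `F` by the heavy letter
as long as the result stays solid does not change the extension, so every such string is the
extension of a right-maximal solid factor at `j`, which it determines. Right-maximal solid factors
at a fixed position form a prefix-free set, each of probability at least `1/z`, and by the Kraft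
inequality for the position-dependent letter distributions their probabilities sum to at most `1`.
-/

section WeightedSequence

variable {A : Type*} {p : ℕ → A → ℝ}

def IsPrefixFree (T : Set (List A)) : Prop :=
  ∀ ⦃F⦄, F ∈ T → ∀ ⦃G⦄, G ∈ T → F <+: G → F = G

@[simp]
lemma matchProb_nil (i : ℕ) : matchProb p i [] = 1 := rfl

lemma matchProb_cons (i : ℕ) (a : A) (t : List A) :
    matchProb p i (a :: t) = p i a * matchProb p (i + 1) t := rfl

@[simp]
lemma matchProb_singleton (i : ℕ) (a : A) : matchProb p i [a] = p i a := by
  simp [matchProb_cons]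

lemma matchProb_append (i : ℕ) (F G : List A) :
    matchProb p i (F ++ G) = matchProb p i F * matchProb p (i + F.length) G := by
  induction F generalizing i with
  | nil => simp
  | cons a t ih =>
    simp only [List.cons_append, matchProb_cons, ih, List.length_cons, mul_assoc]
    rw [Nat.add_right_comm, Nat.add_assoc]

lemma matchProb_nonneg (hp0 : ∀ j a, 0 ≤ p j a) (i : ℕ) (P : List A) :
    0 ≤ matchProb p i P := by
  induction P generalizing i with
  | nil => simp
  | cons a t ih => exact mul_nonneg (hp0 _ _) (ih _)

lemma sum_matchProb_eq_sum_preimage_cons [Fintype A] (j : ℕ) {T : Finset (List A)}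
    (hT : [] ∉ T) :
    ∑ F ∈ T, matchProb p j F =
      ∑ a, p j a * ∑ t ∈ T.preimage (List.cons a) List.cons_injective.injOn,
        matchProb p (j + 1) t := by
  have hhead : ∀ F ∈ T, F.head? ∈ Finset.univ.map Function.Embedding.some := by
    intro F hF
    cases F with
    | nil => exact absurd hF hT
    | cons a t => simp
  rw [← Finset.sum_fiberwise_of_maps_to hhead, Finset.sum_map]
  refine Finset.sum_congr rfl fun a _ => ?_
  simp only [Finset.mul_sum, ← matchProb_cons, Finset.sum_preimage', Set.mem_range,
    Function.Embedding.some_apply, List.head?_eq_some_iff, eq_comm]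

theorem sum_matchProb_le_one_of_isPrefixFree [Fintype A] (hp0 : ∀ j a, 0 ≤ p j a)
    (hp1 : ∀ j, ∑ a, p j a = 1) (j : ℕ) {T : Finset (List A)}
    (hT : IsPrefixFree (T : Set (List A))) :
    ∑ F ∈ T, matchProb p j F ≤ 1 := by
  obtain ⟨m, hm⟩ : ∃ m, ∀ F ∈ T, F.length ≤ m :=
    ⟨_, fun F hF => Finset.le_sup (f := List.length) hF⟩
  induction m generalizing j T with
  | zero =>
    have hT0 : T ⊆ {[]} := fun F hF => by simpa using hm F hF
    rcases Finset.subset_singleton_iff.mp hT0 with rfl | rfl <;> simp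
  | succ m ih =>
    by_cases hnil : [] ∈ T
    · rw [Finset.eq_singleton_iff_unique_mem.mpr
        ⟨hnil, fun G hG => (hT hnil hG List.nil_prefix).symm⟩]
      simp
    rw [sum_matchProb_eq_sum_preimage_cons j hnil, ← hp1 j]
    refine Finset.sum_le_sum fun a _ => mul_le_of_le_one_right (hp0 j a) (ih (j + 1) ?_ ?_)
    · intro t ht t' ht' htt'
      simpa using hT (Finset.mem_preimage.mp ht) (Finset.mem_preimage.mp ht')
        (List.cons_prefix_cons.mpr ⟨rfl, htt'⟩)
    · intro t ht
      simpa using hm _ (Finset.mem_preimage.mp ht)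

lemma matchProb_le_one [Fintype A] (hp0 : ∀ j a, 0 ≤ p j a) (hp1 : ∀ j, ∑ a, p j a = 1)
    (i : ℕ) (P : List A) : matchProb p i P ≤ 1 := by
  simpa using sum_matchProb_le_one_of_isPrefixFree hp0 hp1 i (T := {P})
    (fun F hF G hG _ => by simp_all)

variable {n : ℕ} {z : ℝ} {j : ℕ}

lemma SolidAt.of_prefix [Fintype A] (hp0 : ∀ j a, 0 ≤ p j a) (hp1 : ∀ j, ∑ a, p j a = 1)
    {F G : List A} (hG : SolidAt n z p j G) (hFG : F <+: G) : SolidAt n z p j F := by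
  obtain ⟨t, rfl⟩ := hFG
  obtain ⟨hj, hlen, hprob⟩ := hG
  refine ⟨hj, by simp only [List.length_append] at hlen; omega, ?_⟩
  rw [matchProb_append] at hprob
  exact hprob.trans
    (mul_le_of_le_one_right (matchProb_nonneg hp0 _ _) (matchProb_le_one hp0 hp1 _ _))

lemma SolidAt.append_heavy (hp0 : ∀ j a, 0 ≤ p j a) {h : ℕ → A}
    (hh : ∀ j a, p j a ≤ p j (h j)) {F : List A} {a : A} (ha : SolidAt n z p j (F ++ [a])) :
    SolidAt n z p j (F ++ [h (j + F.length)]) := by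
  obtain ⟨hj, hlen, hprob⟩ := ha
  refine ⟨hj, by simpa using hlen, ?_⟩
  rw [matchProb_append, matchProb_singleton] at hprob ⊢
  exact hprob.trans (mul_le_mul_of_nonneg_left (hh _ _) (matchProb_nonneg hp0 _ _))

lemma isPrefixFree_setOf_rightMaximalAt [Fintype A] (hp0 : ∀ j a, 0 ≤ p j a)
    (hp1 : ∀ j, ∑ a, p j a = 1) : IsPrefixFree {G : List A | RightMaximalAt n z p j G} := by
  rintro F hF G hG ⟨_ | ⟨b, t⟩, rfl⟩
  · simp
  · exact absurd (hG.1.of_prefix hp0 hp1 ⟨t, by simp⟩) (hF.2 b)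

theorem card_le_of_rightMaximalAt [Fintype A] (hp0 : ∀ j a, 0 ≤ p j a)
    (hp1 : ∀ j, ∑ a, p j a = 1) (hz : 0 < z) {T : Finset (List A)}
    (hT : ∀ G ∈ T, RightMaximalAt n z p j G) : (T.card : ℝ) ≤ z := by
  have hkraft := sum_matchProb_le_one_of_isPrefixFree hp0 hp1 j (T := T)
    fun F hF G hG => isPrefixFree_setOf_rightMaximalAt hp0 hp1 (hT F hF) (hT G hG)
  have hlow : T.card * (1 / z) ≤ ∑ F ∈ T, matchProb p j F := by
    simpa using Finset.card_nsmul_le_sum T (matchProb p j) (1 / z) fun F hF => (hT F hF).1.2.2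
  rw [mul_one_div, div_le_iff₀ hz] at hlow
  exact hlow.trans (mul_le_of_le_one_left hz.le hkraft)

lemma heavyExt_length (h : ℕ → A) (j n : ℕ) : (heavyExt h j n).length = n + 1 - j := by
  simp [heavyExt]

lemma heavyExt_eq_cons (h : ℕ → A) (hj : j ≤ n) :
    heavyExt h j n = h j :: heavyExt h (j + 1) n := by
  rw [heavyExt, show n + 1 - j = n + 1 - (j + 1) + 1 by omega, List.range_succ_eq_map]
  simp [heavyExt, Function.comp_def, Nat.add_assoc, Nat.add_comm 1]

lemma length_append_heavyExt (h : ℕ → A) {F : List A} (hF : j + F.length ≤ n + 1) :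
    (F ++ heavyExt h (j + F.length) n).length = n + 1 - j := by
  simp only [List.length_append, heavyExt_length]
  omega

theorem exists_rightMaximalAt_append_heavyExt (hp0 : ∀ j a, 0 ≤ p j a) {h : ℕ → A}
    (hh : ∀ j a, p j a ≤ p j (h j)) {F : List A} (hF : SolidAt n z p j F) :
    ∃ G, RightMaximalAt n z p j G ∧
      F ++ heavyExt h (j + F.length) n = G ++ heavyExt h (j + G.length) n := by
  by_cases hmax : ∀ a, ¬ SolidAt n z p j (F ++ [a])
  · exact ⟨F, ⟨hF, hmax⟩, rfl⟩
  obtain ⟨a, ha⟩ := not_forall_not.mp hmax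
  have hlen : j + F.length ≤ n := by simpa [← Nat.add_assoc] using ha.2.1
  obtain ⟨G, hG, hext⟩ := exists_rightMaximalAt_append_heavyExt hp0 hh (ha.append_heavy hp0 hh)
  refine ⟨G, hG, ?_⟩
  rw [← hext, heavyExt_eq_cons h hlen]
  simp [Nat.add_assoc]
termination_by n + 1 - (j + F.length)
decreasing_by simp only [List.length_append, List.length_singleton]; omega

end WeightedSequence

theorem stmt8_general {A : Type*} [Fintype A] (n : ℕ) (z : ℝ) (hz : 1 ≤ z) (p : ℕ → A → ℝ)
    (hp0 : ∀ j a, 0 ≤ p j a) (hp1 : ∀ j, ∑ a, p j a = 1)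
    (h : ℕ → A) (hh : ∀ j a, p j a ≤ p j (h j))
    (i : ℕ) (S : Finset (List A))
    (hS : ∀ s ∈ S, s ∈ ExtSet n z p h ∧ s.length = i) :
    (S.card : ℝ) ≤ z := by
  have hext : ∀ s ∈ S, ∃ G, RightMaximalAt n z p (n + 1 - i) G ∧
      s = G ++ heavyExt h (n + 1 - i + G.length) n := by
    intro s hs
    obtain ⟨⟨j, F, hF, rfl⟩, hlen⟩ := hS s hs
    rw [length_append_heavyExt h hF.2.1] at hlen
    obtain rfl : j = n + 1 - i := by have := hF.2.1; omega
    exact exists_rightMaximalAt_append_heavyExt hp0 hh hF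
  choose! G hG hsG using hext
  have hinj : Set.InjOn G S := fun s hs t ht hst => by rw [hsG s hs, hsG t ht, hst]
  calc (S.card : ℝ) = (S.image G).card := by rw [Finset.card_image_of_injOn hinj]
    _ ≤ z := card_le_of_rightMaximalAt hp0 hp1 (by linarith) (by simpa using hG)

/-- For each `0 ≤ i ≤ n`, there are at most `z` strings in `ℰ` of length exactly `i`. -/
theorem stmt8 {A : Type*} [Fintype A] (n : ℕ) (z : ℝ) (hz : 1 ≤ z) (p : ℕ → A → ℝ)
    (hp0 : ∀ j a, 0 ≤ p j a) (hp1 : ∀ j, ∑ a, p j a = 1)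
    (h : ℕ → A) (hh : ∀ j a, p j a ≤ p j (h j))
    (i : ℕ) (hi : i ≤ n) (S : Finset (List A))
    (hS : ∀ s ∈ S, s ∈ ExtSet n z p h ∧ s.length = i) :
    (S.card : ℝ) ≤ z :=
  stmt8_general n z hz p hp0 hp1 h hh i S hS
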